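/- arXiv:2411.09230 — 2 statements merged into one kernel-verified Lean document; each statement's English description precedes it below -/
import Mathlib

section
/- If an n×n real matrix A has n distinct eigenvalues, then there exists a row vector c such that c, cA, ..., cA^{n-1} are linearly independent; i.e., the pair (A, c) is completely observable. -/
open Matrix Polynomial

lemma eval_charpoly_aux {n : ℕ} {K : Type*} [Field K] (M : Matrix (Fin n) (Fin n) K) (μ : K) :
    M.charpoly.eval μ = (μ • (1 : Matrix (Fin n) (Fin n) K) - M).det := by
  rw [Matrix.charpoly, ← Polynomial.coe_evalRingHom, RingHom.map_det]
  congr 1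
  ext i j
  by_cases h : i = j <;>
    simp [h, Matrix.charmatrix_apply, Matrix.one_apply, Matrix.diagonal_apply]

/-- If an `n × n` real matrix has `n` distinct complex eigenvalues, then there is a row
vector `c` with `c, cA, …, cA^{n-1}` linearly independent, i.e. `(A, c)` is completely
observable. -/
theorem stmt11 (n : ℕ) (A : Matrix (Fin n) (Fin n) ℝ)
    (hA : Squarefree (A.charpoly.map (algebraMap ℝ ℂ))) :
    ∃ c : Fin n → ℝ, LinearIndependent ℝ (fun i : Fin n => c ᵥ* A ^ (i : ℕ)) := by
  classical
  set f : ℝ →+* ℂ := algebraMap ℝ ℂ with hf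
  set B : Matrix (Fin n) (Fin n) ℂ := A.map f with hB
  have hBpow : ∀ k : ℕ, B ^ k = (A ^ k).map f := by
    intro k
    simp only [hB, ← RingHom.mapMatrix_apply, ← map_pow]
  have hcp : B.charpoly = A.charpoly.map f := Matrix.charpoly_map A f
  have hsf : Squarefree B.charpoly := hcp ▸ hA
  have hsep : B.charpoly.Separable := PerfectField.separable_iff_squarefree.2 hsf
  have hnodup : B.charpoly.roots.Nodup := Polynomial.nodup_roots hsep
  have hmonic : B.charpoly.Monic := Matrix.charpoly_monic B
  have hcard : B.charpoly.roots.card = n := by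
    rw [(Polynomial.splits_iff_card_roots).1 (IsAlgClosed.splits _),
      Matrix.charpoly_natDegree_eq_dim, Fintype.card_fin]
  have hcardF : B.charpoly.roots.toFinset.card = n := by
    rw [Multiset.toFinset_card_of_nodup hnodup, hcard]
  set e := Finset.equivFinOfCardEq hcardF with he
  set lam : Fin n → ℂ := fun i => ((e.symm i : B.charpoly.roots.toFinset) : ℂ) with hlam
  have hlaminj : Function.Injective lam := by
    intro i j h
    exact e.symm.injective (Subtype.ext h)
  have hlamroot : ∀ i, B.charpoly.eval (lam i) = 0 := by
    intro i
    have := (e.symm i).2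
    rw [Multiset.mem_toFinset, Polynomial.mem_roots hmonic.ne_zero] at this
    exact this
  -- eigenvectors
  have hev : ∀ i : Fin n, ∃ w : Fin n → ℂ, w ≠ 0 ∧ w ᵥ* B = lam i • w := by
    intro i
    have hdet : (lam i • (1 : Matrix (Fin n) (Fin n) ℂ) - B).det = 0 := by
      rw [← eval_charpoly_aux]; exact hlamroot i
    have hdetT : ((lam i • (1 : Matrix (Fin n) (Fin n) ℂ) - B)ᵀ).det = 0 := by
      rw [Matrix.det_transpose]; exact hdet
    obtain ⟨v, hv0, hv⟩ := (Matrix.exists_mulVec_eq_zero_iff).2 hdetT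
    refine ⟨v, hv0, ?_⟩
    rw [Matrix.mulVec_transpose, Matrix.vecMul_sub] at hv
    have h1 : v ᵥ* (lam i • (1 : Matrix (Fin n) (Fin n) ℂ)) = lam i • v := by
      ext j
      simp [Matrix.vecMul, dotProduct, Matrix.one_apply, mul_comm]
    rw [h1] at hv
    have := sub_eq_zero.1 hv
    exact this.symm
  choose w hw0 hwB using hev
  -- linear independence of eigenvectors
  have hwli : LinearIndependent ℂ w := by
    apply Module.End.eigenvectors_linearIndependent' (B.vecMulLinear) lam hlaminj
    intro i
    constructor
    · rw [Module.End.mem_eigenspace_iff]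
      show w i ᵥ* B = lam i • w i
      exact hwB i
    · exact hw0 i
  set c' : Fin n → ℂ := ∑ i, w i with hc'
  have hwpow : ∀ (i : Fin n) (k : ℕ), w i ᵥ* B ^ k = lam i ^ k • w i := by
    intro i k
    induction k with
    | zero => simp
    | succ k ih =>
      rw [pow_succ, ← Matrix.vecMul_vecMul, ih, Matrix.smul_vecMul, hwB, smul_smul, pow_succ]
  have hc'pow : ∀ k : ℕ, c' ᵥ* B ^ k = ∑ i, lam i ^ k • w i := by
    intro k
    have : (∑ i, w i) ᵥ* B ^ k = ∑ i, w i ᵥ* B ^ k := by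
      ext j
      simp only [Matrix.vecMul, dotProduct, Finset.sum_apply, Finset.sum_mul]
      exact Finset.sum_comm
    rw [hc', this]
    exact Finset.sum_congr rfl fun i _ => hwpow i k
  -- the complex observability family is linearly independent
  have hOC : LinearIndependent ℂ (fun k : Fin n => c' ᵥ* B ^ (k : ℕ)) := by
    rw [Fintype.linearIndependent_iff]
    intro a ha
    have ha' : ∑ i, (∑ k : Fin n, a k * lam i ^ (k : ℕ)) • w i = 0 := by
      rw [← ha]
      simp_rw [hc'pow, Finset.smul_sum, smul_smul, Finset.sum_smul]
      rw [Finset.sum_comm]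
    have hcoef : ∀ i, ∑ k : Fin n, a k * lam i ^ (k : ℕ) = 0 :=
      Fintype.linearIndependent_iff.1 hwli _ ha'
    intro k
    have hV : (Matrix.vandermonde lam).det ≠ 0 := by
      rw [Matrix.det_vandermonde]
      refine Finset.prod_ne_zero_iff.2 fun i _ => Finset.prod_ne_zero_iff.2 fun j hj => ?_
      rw [Finset.mem_Ioi] at hj
      exact sub_ne_zero.2 fun h => (lt_irrefl i (hlaminj h ▸ hj)).elim
    have hmv : Matrix.vandermonde lam *ᵥ a = 0 := by
      ext i
      simpa [Matrix.mulVec, Matrix.vandermonde, dotProduct, mul_comm] using hcoef i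
    have hinj := Matrix.mulVec_injective_iff_isUnit.2
      ((Matrix.isUnit_iff_isUnit_det _).2 (isUnit_iff_ne_zero.2 hV))
    have := hinj (hmv.trans (Matrix.mulVec_zero _).symm)
    exact congrFun this k
  -- determinant polynomial
  set Pmat : Matrix (Fin n) (Fin n) (MvPolynomial (Fin n) ℝ) :=
    Matrix.of fun k j => ∑ m, MvPolynomial.X m * MvPolynomial.C ((A ^ (k : ℕ)) m j) with hPmat
  set P : MvPolynomial (Fin n) ℝ := Pmat.det with hP
  have heval : ∀ c : Fin n → ℝ,
      MvPolynomial.eval c P = (Matrix.of fun (k : Fin n) j => (c ᵥ* A ^ (k : ℕ)) j).det := by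
    intro c
    rw [hP, RingHom.map_det]
    congr 1
    ext k j
    simp [hPmat, Matrix.vecMul, dotProduct]
  have haeval : (MvPolynomial.aeval c' P : ℂ)
      = (Matrix.of fun (k : Fin n) j => (c' ᵥ* B ^ (k : ℕ)) j).det := by
    rw [hP]
    rw [show (MvPolynomial.aeval c' Pmat.det : ℂ)
        = ((MvPolynomial.aeval c' : MvPolynomial (Fin n) ℝ →ₐ[ℝ] ℂ) :
            MvPolynomial (Fin n) ℝ →+* ℂ) Pmat.det from rfl, RingHom.map_det]
    congr 1
    ext k j
    simp [hPmat, hBpow, Matrix.vecMul, dotProduct, Matrix.map_apply, mul_comm, hf, Complex.coe_algebraMap]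
  have hPne : P ≠ 0 := by
    intro h0
    have hdet : (Matrix.of fun (k : Fin n) j => (c' ᵥ* B ^ (k : ℕ)) j).det ≠ 0 := by
      have hu : IsUnit (Matrix.of fun (k : Fin n) j => (c' ᵥ* B ^ (k : ℕ)) j) :=
        Matrix.linearIndependent_rows_iff_isUnit.1 hOC
      exact ((Matrix.isUnit_iff_isUnit_det _).1 hu).ne_zero
    rw [← haeval, h0, map_zero] at hdet
    exact hdet rfl
  have hex : ∃ c : Fin n → ℝ, MvPolynomial.eval c P ≠ 0 := by
    by_contra h
    push_neg at h
    exact hPne (MvPolynomial.funext fun x => by simpa using h x)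
  obtain ⟨c, hc⟩ := hex
  refine ⟨c, ?_⟩
  rw [heval] at hc
  have hu : IsUnit (Matrix.of fun (k : Fin n) j => (c ᵥ* A ^ (k : ℕ)) j) :=
    (Matrix.isUnit_iff_isUnit_det _).2 (isUnit_iff_ne_zero.2 hc)
  exact Matrix.linearIndependent_rows_iff_isUnit.2 hu
end

section
/- The set of pairs (A, c) ∈ M_{n×n}(ℝ) × ℝ^n such that the pair (A, c) is completely observable has full Lebesgue measure in M_{n×n}(ℝ) × ℝ^n. -/
open Matrix MeasureTheory

/-!
The determinant of the observability matrix is a polynomial in the `n² + n` entries of `(A, c)`.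
It is not the zero polynomial: for the cyclic shift `A` and `c = e₀` one has `c Aⁱ = eᵢ`, so the
observability matrix is the identity. The zero set of a nonzero real polynomial is Lebesgue-null:
writing it as a polynomial in the first variable, for almost every value of the remaining ones
(by induction, those where its leading coefficient does not vanish) the fibre is a finite set of
roots, and Fubini concludes.
-/

namespace MvPolynomial

theorem finite_setOf_eval_cons_eq_zero {R : Type*} [CommRing R] [IsDomain R] {d : ℕ}
    (p : MvPolynomial (Fin (d + 1)) R) {s : Fin d → R}
    (hs : eval s (finSuccEquiv R d p).leadingCoeff ≠ 0) :
    {y : R | eval (Fin.cons y s) p = 0}.Finite := by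
  have hmap : (finSuccEquiv R d p).map (eval s) ≠ 0 := by
    rw [← Polynomial.leadingCoeff_ne_zero,
      Polynomial.leadingCoeff_map_of_leadingCoeff_ne_zero _ hs]
    exact hs
  simpa only [eval_eq_eval_mv_eval', Polynomial.IsRoot.def] using
    Polynomial.finite_setOfPred_isRoot hmap

theorem volume_setOf_eval_eq_zero_fin :
    ∀ {d : ℕ} {p : MvPolynomial (Fin d) ℝ}, p ≠ 0 → volume {x | eval x p = 0} = 0
  | 0, p, hp => by
    obtain ⟨a, rfl⟩ := C_surjective (Fin 0) p
    have ha : a ≠ 0 := by rintro rfl; exact hp C_0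
    simp [ha]
  | d + 1, p, hp => by
    have hlc : (finSuccEquiv ℝ d p).leadingCoeff ≠ 0 := by simpa using hp
    have hae : ∀ᵐ s : Fin d → ℝ, eval s (finSuccEquiv ℝ d p).leadingCoeff ≠ 0 :=
      ae_iff.mpr (by simpa using volume_setOf_eval_eq_zero_fin hlc)
    set Z := {x : Fin (d + 1) → ℝ | eval x p = 0}
    have hZ : MeasurableSet Z := (continuous_eval p).measurable (measurableSet_singleton 0)
    have e := volume_preserving_piFinSuccAbove (fun _ : Fin (d + 1) => ℝ) 0
    rw [← e.symm.measure_preimage hZ.nullMeasurableSet, Measure.volume_eq_prod,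
      Measure.prod_apply_symm (hZ.preimage e.symm.measurable)]
    refine lintegral_eq_zero_of_ae_eq_zero ?_
    filter_upwards [hae] with s hs
    rw [Pi.zero_apply]
    convert (finite_setOf_eval_cons_eq_zero p hs).measure_zero volume
    ext y
    simp only [Z, MeasurableEquiv.piFinSuccAbove_symm_apply, Fin.insertNthEquiv_zero,
      Set.preimage_ofPred_eq, Set.mem_ofPred_eq]
    rfl

theorem volume_setOf_eval_eq_zero {σ : Type*} [Fintype σ] {p : MvPolynomial σ ℝ} (hp : p ≠ 0) :
    volume {x : σ → ℝ | eval x p = 0} = 0 := by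
  let e := Fintype.equivFin σ
  have hq : rename e p ≠ 0 := (rename_injective e e.injective).ne_iff' (map_zero _) |>.mpr hp
  have hZ : MeasurableSet {y : Fin _ → ℝ | eval y (rename e p) = 0} :=
    (continuous_eval _).measurable (measurableSet_singleton 0)
  have hpre : {x : σ → ℝ | eval x p = 0} =
      MeasurableEquiv.arrowCongr' e (.refl ℝ) ⁻¹' {y | eval y (rename e p) = 0} := by
    ext x
    simp [eval_rename, Function.comp_def, MeasurableEquiv.arrowCongr', Equiv.arrowCongr']
  rw [hpre, (volume_preserving_arrowCongr' e _ (.id volume)).measure_preimage hZ.nullMeasurableSet]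
  exact volume_setOf_eval_eq_zero_fin hq

end MvPolynomial

theorem MeasureTheory.volume_measurePreserving_uncurry (ι κ α : Type*) [Fintype ι] [Fintype κ]
    [MeasureSpace α] [SigmaFinite (volume : Measure α)] :
    MeasurePreserving (Function.uncurry : (ι → κ → α) → ι × κ → α) := by
  have hmeas : Measurable (Function.uncurry : (ι → κ → α) → ι × κ → α) :=
    measurable_pi_lambda _ fun q => (measurable_pi_apply q.2).comp (measurable_pi_apply q.1)
  refine ⟨hmeas, ?_⟩
  rw [volume_pi]
  refine (Measure.pi_eq fun s hs => ?_).symm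
  have hpre : Function.uncurry ⁻¹' Set.univ.pi s =
      Set.univ.pi fun i => Set.univ.pi fun j => s (i, j) := by
    ext f
    simp [Set.mem_pi, Prod.forall]
  rw [Measure.map_apply hmeas (.univ_pi hs), hpre, Measure.pi_pi]
  simp_rw [volume_pi_pi]
  exact (Fintype.prod_prod_type fun q => volume (s q)).symm

section Observability

variable {R : Type*}

def observabilityMatrix [Semiring R] {n : ℕ} (A : Matrix (Fin n) (Fin n) R) (c : Fin n → R) :
    Matrix (Fin n) (Fin n) R :=
  of fun i j => (c ᵥ* A ^ (i : ℕ)) j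

theorem RingHom.map_observabilityMatrix [Semiring R] {S : Type*} [Semiring S] (f : R →+* S)
    {n : ℕ} (A : Matrix (Fin n) (Fin n) R) (c : Fin n → R) :
    (observabilityMatrix A c).map f = observabilityMatrix (A.map f) (f ∘ c) := by
  ext i j
  simp [observabilityMatrix, RingHom.map_vecMul, ← RingHom.mapMatrix_apply, map_pow]

variable (R) in
def cyclicShift [Zero R] [One R] (m : ℕ) : Matrix (Fin (m + 1)) (Fin (m + 1)) R :=
  of fun a b => if b = a + 1 then 1 else 0

open Fin.NatCast in
theorem vecMul_cyclicShift_pow [Semiring R] {m : ℕ} (v : Fin (m + 1) → R) (k : ℕ) :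
    v ᵥ* cyclicShift R m ^ k = fun j => v (j - k) := by
  induction k with
  | zero => simp
  | succ k ih =>
    rw [pow_succ, ← vecMul_vecMul, ih]
    ext j
    simp [cyclicShift, vecMul, dotProduct, ← sub_eq_iff_eq_add, sub_sub, add_comm]

theorem observabilityMatrix_cyclicShift [Semiring R] {m : ℕ} :
    observabilityMatrix (cyclicShift R m) (Pi.single 0 1) = 1 := by
  ext i j
  rw [observabilityMatrix, of_apply, vecMul_cyclicShift_pow]
  simp [Matrix.one_apply, Pi.single_apply, sub_eq_zero, eq_comm]

variable (R) in
noncomputable def genericObservabilityDet [CommRing R] (n : ℕ) :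
    MvPolynomial ((Fin n × Fin n) ⊕ Fin n) R :=
  (observabilityMatrix (of fun a b => .X (.inl (a, b))) fun k => .X (.inr k)).det

theorem eval_genericObservabilityDet [CommRing R] {n : ℕ} (x : (Fin n × Fin n) ⊕ Fin n → R) :
    MvPolynomial.eval x (genericObservabilityDet R n) =
      (observabilityMatrix (of fun a b => x (.inl (a, b))) fun k => x (.inr k)).det := by
  rw [genericObservabilityDet, RingHom.map_det, RingHom.mapMatrix_apply,
    RingHom.map_observabilityMatrix]
  congr 2 <;> ext <;> simp

theorem genericObservabilityDet_ne_zero [CommRing R] [Nontrivial R] (n : ℕ) :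
    genericObservabilityDet R n ≠ 0 := by
  cases n with
  | zero => simp [genericObservabilityDet]
  | succ m =>
    refine ne_zero_of_map
      (f := MvPolynomial.eval (Sum.elim (Function.uncurry (cyclicShift R m)) (Pi.single 0 1))) ?_
    rw [eval_genericObservabilityDet]
    exact (observabilityMatrix_cyclicShift (R := R) ▸ det_one).trans_ne one_ne_zero

end Observability

/-- The set of pairs `(A, c)` such that `(A, c)` is completely observable (the observability
matrix with rows `c Aⁱ` is invertible) has full Lebesgue measure in `M_{n×n}(ℝ) × ℝⁿ`. -/
theorem stmt14 (n : ℕ) :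
    volume {p : (Fin n → Fin n → ℝ) × (Fin n → ℝ) |
      ¬ IsUnit (Matrix.of fun i j : Fin n =>
          (p.2 ᵥ* (Matrix.of p.1) ^ (i : ℕ)) j).det} = 0 := by
  let F : (Fin n → Fin n → ℝ) × (Fin n → ℝ) → (Fin n × Fin n) ⊕ Fin n → ℝ :=
    (MeasurableEquiv.sumPiEquivProdPi fun _ => ℝ).symm ∘ Prod.map Function.uncurry id
  have hF : MeasurePreserving F :=
    (volume_measurePreserving_sumPiEquivProdPi_symm _).comp
      ((volume_measurePreserving_uncurry _ _ ℝ).prod (.id volume))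
  have hZ : MeasurableSet {x | MvPolynomial.eval x (genericObservabilityDet ℝ n) = 0} :=
    (MvPolynomial.continuous_eval _).measurable (measurableSet_singleton 0)
  have hdet (p : (Fin n → Fin n → ℝ) × (Fin n → ℝ)) : (observabilityMatrix (of p.1) p.2).det =
      MvPolynomial.eval (F p) (genericObservabilityDet ℝ n) :=
    (eval_genericObservabilityDet (F p)).symm
  simp_rw [isUnit_iff_ne_zero, not_not, ← observabilityMatrix.eq_1, hdet]
  exact (hF.measure_preimage hZ.nullMeasurableSet).trans
    (MvPolynomial.volume_setOf_eval_eq_zero (genericObservabilityDet_ne_zero n))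
end
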